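/- arXiv:2002.06149 — 7 statements merged into one kernel-verified Lean document; each statement's English description precedes it below -/
import Mathlib

section
/- Let n ≥ 3 be odd and m = (n-1)/2. Then in ℤ/nℤ: -S = L, -O = E, 2S = E, 2L = O, mE = L, and mO = S, where S = {1,...,m}, L = {m+1,...,2m}, O = {1,3,...,n-2}, E = {2,4,...,n-1} are viewed as sets of residues modulo n. -/
/-- For odd `n = 2m+1 ≥ 3`, in `ℤ/nℤ`: `-S = L`, `-O = E`, `2S = E`, `2L = O`,
`mE = L`, and `mO = S`, where `S = {1,...,m}`, `L = {m+1,...,2m}`,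
`O = {1,3,...,n-2}`, `E = {2,4,...,n-1}` (via representatives in `[1..n-1]`). -/
theorem stmt_1 (n m : ℕ) [NeZero n] (hn : 3 ≤ n) (hodd : Odd n) (hm : m = (n - 1) / 2) :
    ((fun x : ZMod n => -x) '' {x | 1 ≤ x.val ∧ x.val ≤ m}
        = {x : ZMod n | m + 1 ≤ x.val ∧ x.val ≤ 2 * m}) ∧
    ((fun x : ZMod n => -x) '' {x | Odd x.val ∧ 1 ≤ x.val ∧ x.val ≤ n - 2}
        = {x : ZMod n | Even x.val ∧ 2 ≤ x.val ∧ x.val ≤ n - 1}) ∧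
    ((fun x : ZMod n => 2 * x) '' {x | 1 ≤ x.val ∧ x.val ≤ m}
        = {x : ZMod n | Even x.val ∧ 2 ≤ x.val ∧ x.val ≤ n - 1}) ∧
    ((fun x : ZMod n => 2 * x) '' {x | m + 1 ≤ x.val ∧ x.val ≤ 2 * m}
        = {x : ZMod n | Odd x.val ∧ 1 ≤ x.val ∧ x.val ≤ n - 2}) ∧
    ((fun x : ZMod n => (m : ZMod n) * x) '' {x | Even x.val ∧ 2 ≤ x.val ∧ x.val ≤ n - 1}
        = {x : ZMod n | m + 1 ≤ x.val ∧ x.val ≤ 2 * m}) ∧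
    ((fun x : ZMod n => (m : ZMod n) * x) '' {x | Odd x.val ∧ 1 ≤ x.val ∧ x.val ≤ n - 2}
        = {x : ZMod n | 1 ≤ x.val ∧ x.val ≤ m}) := by
  obtain ⟨k, hk⟩ := hodd
  have hnm : n = 2 * m + 1 := by omega
  have hval_ne : ∀ x : ZMod n, 1 ≤ x.val → x ≠ 0 := by
    intro x h h0
    rw [h0, ZMod.val_zero] at h
    omega
  have hneg : ∀ x : ZMod n, 1 ≤ x.val → (-x).val = n - x.val := by
    intro x h
    rw [ZMod.neg_val, if_neg (hval_ne x h)]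
  -- A : -S = L
  have hA : (fun x : ZMod n => -x) '' {x | 1 ≤ x.val ∧ x.val ≤ m}
      = {x : ZMod n | m + 1 ≤ x.val ∧ x.val ≤ 2 * m} := by
    ext y
    simp only [Set.mem_image, Set.mem_setOf_eq]
    constructor
    · rintro ⟨x, ⟨h1, h2⟩, rfl⟩
      rw [hneg x h1]
      omega
    · rintro ⟨h1, h2⟩
      refine ⟨-y, ?_, neg_neg y⟩
      rw [hneg y (by omega)]
      omega
  -- B : -O = E
  have hB : (fun x : ZMod n => -x) '' {x | Odd x.val ∧ 1 ≤ x.val ∧ x.val ≤ n - 2}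
      = {x : ZMod n | Even x.val ∧ 2 ≤ x.val ∧ x.val ≤ n - 1} := by
    ext y
    simp only [Set.mem_image, Set.mem_setOf_eq, Nat.odd_iff, Nat.even_iff]
    constructor
    · rintro ⟨x, ⟨h0, h1, h2⟩, rfl⟩
      rw [hneg x h1]
      omega
    · rintro ⟨h0, h1, h2⟩
      refine ⟨-y, ?_, neg_neg y⟩
      rw [hneg y (by omega)]
      omega
  -- C : 2S = E
  have hC : (fun x : ZMod n => 2 * x) '' {x | 1 ≤ x.val ∧ x.val ≤ m}
      = {x : ZMod n | Even x.val ∧ 2 ≤ x.val ∧ x.val ≤ n - 1} := by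
    ext y
    simp only [Set.mem_image, Set.mem_setOf_eq, Nat.even_iff]
    constructor
    · rintro ⟨x, ⟨h1, h2⟩, rfl⟩
      have hv : (2 * x).val = (x.val + x.val) % n := by
        rw [two_mul, ZMod.val_add]
      have hlt : x.val + x.val < n := by omega
      rw [hv, Nat.mod_eq_of_lt hlt]
      omega
    · rintro ⟨h0, h1, h2⟩
      have hyn := ZMod.val_lt y
      refine ⟨((y.val / 2 : ℕ) : ZMod n), ?_, ?_⟩
      · rw [ZMod.val_cast_of_lt (by omega)]
        omega
      · have h2k : ((2 * (y.val / 2) : ℕ) : ZMod n) = 2 * ((y.val / 2 : ℕ) : ZMod n) := by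
          push_cast; ring
        have hyv : 2 * (y.val / 2) = y.val := by omega
        rw [← h2k, hyv]
        exact ZMod.natCast_rightInverse y
  -- neg images of L and E
  have hnegL : (fun x : ZMod n => -x) '' {x : ZMod n | m + 1 ≤ x.val ∧ x.val ≤ 2 * m}
      = {x : ZMod n | 1 ≤ x.val ∧ x.val ≤ m} := by
    rw [← hA, Set.image_image]
    simp
  have hnegE : (fun x : ZMod n => -x) '' {x : ZMod n | Even x.val ∧ 2 ≤ x.val ∧ x.val ≤ n - 1}
      = {x : ZMod n | Odd x.val ∧ 1 ≤ x.val ∧ x.val ≤ n - 2} := by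
    rw [← hB, Set.image_image]
    simp
  -- D : 2L = O
  have hD : (fun x : ZMod n => 2 * x) '' {x : ZMod n | m + 1 ≤ x.val ∧ x.val ≤ 2 * m}
      = {x : ZMod n | Odd x.val ∧ 1 ≤ x.val ∧ x.val ≤ n - 2} := by
    rw [← hA, Set.image_image]
    have heq : (fun x : ZMod n => 2 * -x) = (fun x : ZMod n => -(2 * x)) := by
      funext x; ring
    rw [heq, ← Set.image_image (fun y : ZMod n => -y) (fun x : ZMod n => 2 * x), hC, hnegE]
  -- m * 2 = -1
  have hm2 : ∀ x : ZMod n, (m : ZMod n) * (2 * x) = -x := by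
    intro x
    have h0 : ((2 * m + 1 : ℕ) : ZMod n) = 0 := by rw [← hnm]; exact ZMod.natCast_self n
    push_cast at h0
    linear_combination x * h0
  -- E : mE = L
  have hE : (fun x : ZMod n => (m : ZMod n) * x) ''
        {x : ZMod n | Even x.val ∧ 2 ≤ x.val ∧ x.val ≤ n - 1}
      = {x : ZMod n | m + 1 ≤ x.val ∧ x.val ≤ 2 * m} := by
    rw [← hC, Set.image_image]
    simp only [hm2]
    exact hA
  -- F : mO = S
  have hF : (fun x : ZMod n => (m : ZMod n) * x) ''
        {x : ZMod n | Odd x.val ∧ 1 ≤ x.val ∧ x.val ≤ n - 2}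
      = {x : ZMod n | 1 ≤ x.val ∧ x.val ≤ m} := by
    rw [← hD, Set.image_image]
    simp only [hm2]
    exact hnegL
  exact ⟨hA, hB, hC, hD, hE, hF⟩
end

section
/- Let n ≥ 3 be odd. The map [p,q,r] ↦ [-2p,-2q,-2r] is a bijection from the set of small tours in ℤ/nℤ to the set of odd tours in ℤ/nℤ, with inverse [p,q,r] ↦ [mp,mq,mr] where m = (n-1)/2. -/
/-- Cyclic rotation of an ordered triple. -/
def rotTriple {α : Type*} (t : α × α × α) : α × α × α := (t.2.1, t.2.2, t.1)

/-- Tours: length-3 necklaces (ordered triples up to cyclic rotation) of elements of `ℤ/nℤ`. -/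
def Tour (n : ℕ) : Type :=
  Quot (fun a b : ZMod n × ZMod n × ZMod n => b = rotTriple a)

/-- Componentwise multiplication by a constant. -/
def tripleMul (n : ℕ) (c : ZMod n) (t : ZMod n × ZMod n × ZMod n) :
    ZMod n × ZMod n × ZMod n :=
  (c * t.1, c * t.2.1, c * t.2.2)

/-- Componentwise multiplication descends to tours. -/
def tourMul (n : ℕ) (c : ZMod n) : Tour n → Tour n :=
  Quot.map (tripleMul n c) (by rintro a b rfl; rfl)

/-- A triple is a small tour representative: its entries are distinct and its three
steps have representatives in `{1,...,(n-1)/2}`. -/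
def isSmallTriple (n : ℕ) (t : ZMod n × ZMod n × ZMod n) : Prop :=
  t.1 ≠ t.2.1 ∧ t.2.1 ≠ t.2.2 ∧ t.2.2 ≠ t.1 ∧
  (t.2.1 - t.1).val ≤ (n - 1) / 2 ∧ (t.2.2 - t.2.1).val ≤ (n - 1) / 2 ∧
  (t.1 - t.2.2).val ≤ (n - 1) / 2

/-- A triple is an odd tour representative: its entries are distinct and its three
steps have odd representatives in `[1..n-1]`. -/
def isOddTriple (n : ℕ) (t : ZMod n × ZMod n × ZMod n) : Prop :=
  t.1 ≠ t.2.1 ∧ t.2.1 ≠ t.2.2 ∧ t.2.2 ≠ t.1 ∧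
  Odd (t.2.1 - t.1).val ∧ Odd (t.2.2 - t.2.1).val ∧ Odd (t.1 - t.2.2).val

/-- The set of small tours. -/
def SmallTours (n : ℕ) : Set (Tour n) :=
  {T | ∃ a, isSmallTriple n a ∧ Quot.mk _ a = T}

/-- The set of odd tours. -/
def OddTours (n : ℕ) : Set (Tour n) :=
  {T | ∃ a, isOddTriple n a ∧ Quot.mk _ a = T}

/-!
For odd `n`, multiplication by `-2` on `ℤ/nℤ` is invertible with inverse `m = (n - 1) / 2`.
A nonzero step `s` with `s.val ≤ m` goes to `-2 s`, whose representative `n - 2 s.val` is odd;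
conversely an odd step `s` is `-2 t` for `t = (n - s.val) / 2 ≤ m`, so `m s = t`.
Since multiplication distributes over the differences defining the steps, this transfers from
steps to tours.
-/

theorem ZMod.natCast_half_mul_neg_two {n : ℕ} (hodd : Odd n) :
    (((n - 1) / 2 : ℕ) : ZMod n) * (-2) = 1 := by
  have h : 2 * ((n - 1) / 2) + 1 = n := by obtain ⟨k, rfl⟩ := hodd; omega
  have := congrArg (Nat.cast : ℕ → ZMod n) h
  push_cast [ZMod.natCast_self] at this
  linear_combination -this

theorem ZMod.odd_val_neg_two_mul {n : ℕ} (hodd : Odd n) {s : ZMod n} (hs : s ≠ 0)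
    (hle : s.val ≤ (n - 1) / 2) : Odd (-2 * s).val := by
  have : NeZero n := ⟨hodd.pos.ne'⟩
  have hpos : 0 < s.val := Nat.pos_of_ne_zero ((ZMod.val_ne_zero s).mpr hs)
  have hcast : (-2 * s : ZMod n) = ((n - 2 * s.val : ℕ) : ZMod n) := by
    rw [Nat.cast_sub (by omega), ZMod.natCast_self]
    push_cast [ZMod.natCast_zmod_val]
    ring
  rw [hcast, ZMod.val_natCast_of_lt (by omega)]
  exact Nat.Odd.sub_even (by omega) hodd (even_two_mul _)

theorem ZMod.val_natCast_half_mul_le {n : ℕ} (hodd : Odd n) {s : ZMod n} (hs : Odd s.val) :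
    ((((n - 1) / 2 : ℕ) : ZMod n) * s).val ≤ (n - 1) / 2 := by
  have : NeZero n := ⟨hodd.pos.ne'⟩
  have hlt := ZMod.val_lt s
  have htwo : 2 * ((n - s.val) / 2) = n - s.val :=
    Nat.two_mul_div_two_of_even (Nat.Odd.sub_odd hodd hs)
  have hs_eq : s = -2 * (((n - s.val) / 2 : ℕ) : ZMod n) := by
    have := congrArg (Nat.cast : ℕ → ZMod n) htwo
    push_cast [Nat.cast_sub hlt.le, ZMod.natCast_self, ZMod.natCast_zmod_val] at this
    linear_combination this
  rw [hs_eq, ← mul_assoc, ZMod.natCast_half_mul_neg_two hodd, one_mul,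
    ZMod.val_natCast_of_lt (by omega)]
  have := hs.pos
  omega

theorem tourMul_tourMul {n : ℕ} (a b : ZMod n) (T : Tour n) :
    tourMul n a (tourMul n b T) = tourMul n (a * b) T := by
  induction T using Quot.ind with
  | mk t => exact congrArg (Quot.mk _) (by simp only [tripleMul, mul_assoc])

theorem tourMul_one {n : ℕ} (T : Tour n) : tourMul n 1 T = T := by
  induction T using Quot.ind with
  | mk t => exact congrArg (Quot.mk _) (by simp only [tripleMul, one_mul])

theorem mapsTo_tourMul {n : ℕ} {c : ZMod n} {P Q : ZMod n × ZMod n × ZMod n → Prop}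
    (h : ∀ t, P t → Q (tripleMul n c t)) :
    Set.MapsTo (tourMul n c) {T | ∃ t, P t ∧ Quot.mk _ t = T}
      {T | ∃ t, Q t ∧ Quot.mk _ t = T} := by
  rintro _ ⟨t, ht, rfl⟩
  exact ⟨tripleMul n c t, h t ht, rfl⟩

theorem isSmallTriple.tripleMul_neg_two {n : ℕ} (hodd : Odd n) {t : ZMod n × ZMod n × ZMod n}
    (ht : isSmallTriple n t) : isOddTriple n (tripleMul n (-2) t) := by
  obtain ⟨h₁, h₂, h₃, h₄, h₅, h₆⟩ := ht
  have hinj :=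
    (IsUnit.of_mul_eq_one_right _ (ZMod.natCast_half_mul_neg_two hodd)).mul_right_injective
  have step {a b : ZMod n} (hab : a ≠ b) (hle : (b - a).val ≤ (n - 1) / 2) :
      Odd ((-2 : ZMod n) * b - -2 * a).val := by
    rw [← mul_sub]
    exact ZMod.odd_val_neg_two_mul hodd (sub_ne_zero.mpr hab.symm) hle
  exact ⟨fun h => h₁ (hinj h), fun h => h₂ (hinj h), fun h => h₃ (hinj h),
    step h₁ h₄, step h₂ h₅, step h₃ h₆⟩

theorem isOddTriple.tripleMul_half {n : ℕ} (hodd : Odd n) {t : ZMod n × ZMod n × ZMod n}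
    (ht : isOddTriple n t) : isSmallTriple n (tripleMul n ((n - 1) / 2 : ℕ) t) := by
  obtain ⟨h₁, h₂, h₃, h₄, h₅, h₆⟩ := ht
  have hinj :=
    (IsUnit.of_mul_eq_one _ (ZMod.natCast_half_mul_neg_two hodd)).mul_right_injective
  have step {a b : ZMod n} (ho : Odd (b - a).val) :
      ((((n - 1) / 2 : ℕ) : ZMod n) * b - ((n - 1) / 2 : ℕ) * a).val ≤ (n - 1) / 2 := by
    rw [← mul_sub]
    exact ZMod.val_natCast_half_mul_le hodd ho
  exact ⟨fun h => h₁ (hinj h), fun h => h₂ (hinj h), fun h => h₃ (hinj h),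
    step h₄, step h₅, step h₆⟩

theorem stmt_4_general (n : ℕ) (hodd : Odd n) :
    Set.BijOn (tourMul n (-2)) (SmallTours n) (OddTours n) ∧
    Set.InvOn (tourMul n (((n - 1) / 2 : ℕ) : ZMod n)) (tourMul n (-2))
      (SmallTours n) (OddTours n) := by
  have hinv : Set.InvOn (tourMul n (((n - 1) / 2 : ℕ) : ZMod n)) (tourMul n (-2))
      (SmallTours n) (OddTours n) := by
    have hm := ZMod.natCast_half_mul_neg_two hodd
    refine ⟨fun T _ => ?_, fun T _ => ?_⟩
    · rw [tourMul_tourMul, hm, tourMul_one]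
    · rw [tourMul_tourMul, mul_comm, hm, tourMul_one]
  exact ⟨hinv.bijOn (mapsTo_tourMul fun _ => (·.tripleMul_neg_two hodd))
    (mapsTo_tourMul fun _ => (·.tripleMul_half hodd)), hinv⟩

/-- For odd `n ≥ 3`, the map `[p,q,r] ↦ [-2p,-2q,-2r]` is a bijection from small
tours to odd tours, with inverse `[p,q,r] ↦ [mp,mq,mr]` where `m = (n-1)/2`. -/
theorem stmt_4 (n : ℕ) (hn : 3 ≤ n) (hodd : Odd n) :
    Set.BijOn (tourMul n (-2)) (SmallTours n) (OddTours n) ∧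
    Set.InvOn (tourMul n (((n - 1) / 2 : ℕ) : ZMod n)) (tourMul n (-2))
      (SmallTours n) (OddTours n) :=
  stmt_4_general n hodd
end

section
/- Let n ≥ 3 be odd. The number of small tours in ℤ/nℤ equals the number of odd tours in ℤ/nℤ, and both equal (1/4)·C(n+1,3). -/
abbrev RotRel (α : Type*) (a b : α × α × α) : Prop := b = rotTriple a

section Rotation

variable {α : Type*}

lemma rotTriple_iterate_injective {t : α × α × α} (h₁ : t.1 ≠ t.2.1)
    (h₂ : t.2.1 ≠ t.2.2) :
    Function.Injective fun k : Fin 3 => rotTriple^[k] t := by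
  obtain ⟨a, b, c⟩ := t
  intro k k' h
  fin_cases k <;> fin_cases k' <;> simp [rotTriple] at h ⊢ <;> grind

lemma quot_mk_rotTriple_iterate (k : ℕ) (a : α × α × α) :
    Quot.mk (RotRel α) (rotTriple^[k] a) = Quot.mk _ a := by
  induction k with
  | zero => rfl
  | succ k ih =>
    rw [Function.iterate_succ_apply', ← ih]
    exact (Quot.sound (r := RotRel α) rfl).symm

lemma quot_mk_rotTriple_eq_iff {a b : α × α × α} :
    Quot.mk (RotRel α) a = Quot.mk _ b ↔ ∃ k : Fin 3, rotTriple^[k] a = b := by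
  refine ⟨fun h => ?_, fun ⟨k, hk⟩ => hk ▸ (quot_mk_rotTriple_iterate k a).symm⟩
  rw [Quot.eq] at h
  induction h with
  | rel x y hxy => exact ⟨1, hxy.symm⟩
  | refl x => exact ⟨0, rfl⟩
  | symm x y _ ih =>
    obtain ⟨k, rfl⟩ := ih
    exact ⟨-k, by fin_cases k <;> rfl⟩
  | trans x y z _ _ ih₁ ih₂ =>
    obtain ⟨k, rfl⟩ := ih₁
    obtain ⟨k', rfl⟩ := ih₂
    exact ⟨k + k', by fin_cases k <;> fin_cases k' <;> rfl⟩

theorem card_eq_three_mul_card_quot_rotTriple (P : α × α × α → Prop)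
    (hrot : ∀ t, P t → P (rotTriple t)) (hne : ∀ t, P t → t.1 ≠ t.2.1) :
    Nat.card {t // P t} =
      3 * Nat.card {T : Quot (RotRel α) // ∃ a, P a ∧ Quot.mk _ a = T} := by
  set S := {T : Quot (RotRel α) // ∃ a, P a ∧ Quot.mk _ a = T}
  have hP {a b : α × α × α} (ha : P a) (hab : Quot.mk (RotRel α) a = Quot.mk _ b) : P b := by
    obtain ⟨k, rfl⟩ := quot_mk_rotTriple_eq_iff.mp hab
    fin_cases k
    exacts [ha, hrot _ ha, hrot _ (hrot _ ha)]
  have hout (T : S) : P T.1.out := by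
    obtain ⟨_, a, ha, rfl⟩ := T
    exact hP ha (Quot.out_eq _).symm
  have hmk (k : ℕ) (T : S) : Quot.mk _ (rotTriple^[k] T.1.out) = T.1 :=
    (quot_mk_rotTriple_iterate k _).trans (Quot.out_eq _)
  let f : Fin 3 × S → {t // P t} := fun p =>
    ⟨rotTriple^[p.1] p.2.1.out, hP (hout p.2) (quot_mk_rotTriple_iterate _ _).symm⟩
  have hf : f.Bijective := by
    refine ⟨fun ⟨k, T⟩ ⟨k', T'⟩ h => ?_, fun ⟨t, ht⟩ => ?_⟩
    · have hv : rotTriple^[k] T.1.out = rotTriple^[k'] T'.1.out := congrArg Subtype.val h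
      obtain rfl : T = T' :=
        Subtype.ext ((hmk k T).symm.trans ((congrArg (Quot.mk _) hv).trans (hmk k' T')))
      rw [rotTriple_iterate_injective (hne _ (hout T)) (hne _ (hrot _ (hout T))) hv]
    · obtain ⟨k, hk⟩ := quot_mk_rotTriple_eq_iff.mp (Quot.out_eq (Quot.mk _ t))
      exact ⟨(k, ⟨_, t, ht, rfl⟩), Subtype.ext hk⟩
  rw [← Nat.card_congr (Equiv.ofBijective f hf), Nat.card_prod, Nat.card_eq_fintype_card,
    Fintype.card_fin]

end Rotation

def tripleStepsEquiv {G : Type*} [AddGroup G] (Q : G × G → Prop) :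
    {t : G × G × G // Q (t.2.1 - t.1, t.2.2 - t.2.1)} ≃ G × {s : G × G // Q s} where
  toFun t := (t.1.1, ⟨(t.1.2.1 - t.1.1, t.1.2.2 - t.1.2.1), t.2⟩)
  invFun p := ⟨(p.1, p.2.1.1 + p.1, p.2.1.2 + p.2.1.1 + p.1), by simpa using p.2.2⟩
  left_inv t := by simp
  right_inv p := by simp

def IsSmallStep {n : ℕ} (m : ℕ) (x : ZMod n) : Prop := x ≠ 0 ∧ x.val ≤ m

section Steps

variable {n m : ℕ}

lemma isSmallTriple_iff (t : ZMod n × ZMod n × ZMod n) :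
    isSmallTriple n t ↔ IsSmallStep ((n - 1) / 2) (t.2.1 - t.1) ∧
      IsSmallStep ((n - 1) / 2) (t.2.2 - t.2.1) ∧ IsSmallStep ((n - 1) / 2) (t.1 - t.2.2) := by
  simp only [isSmallTriple, IsSmallStep, sub_ne_zero]
  tauto

lemma isOddTriple_iff (t : ZMod n × ZMod n × ZMod n) :
    isOddTriple n t ↔
      Odd (t.2.1 - t.1).val ∧ Odd (t.2.2 - t.2.1).val ∧ Odd (t.1 - t.2.2).val := by
  have ne_of_odd {a b : ZMod n} (h : Odd (a - b).val) : b ≠ a := fun hab => by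
    simp [hab] at h
  exact ⟨fun h => h.2.2.2,
    fun ⟨h₁, h₂, h₃⟩ => ⟨ne_of_odd h₁, ne_of_odd h₂, ne_of_odd h₃, h₁, h₂, h₃⟩⟩

lemma isSmallStep_iff (x : ZMod n) : IsSmallStep m x ↔ 1 ≤ x.val ∧ x.val ≤ m := by
  rw [IsSmallStep, Ne, ← ZMod.val_eq_zero, Nat.one_le_iff_ne_zero]

lemma odd_val_neg_two_mul_iff (x : ZMod (2 * m + 1)) :
    Odd (-2 * x).val ↔ IsSmallStep m x := by
  obtain ⟨a, ha, rfl⟩ : ∃ a < 2 * m + 1, (a : ZMod (2 * m + 1)) = x :=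
    ⟨x.val, x.val_lt, ZMod.natCast_zmod_val x⟩
  have h : -2 * (a : ZMod (2 * m + 1)) = ((2 * (2 * m + 1) - 2 * a : ℕ) : ZMod _) := by
    rw [Nat.cast_sub (by omega), Nat.cast_mul _ (2 * m + 1 : ℕ), ZMod.natCast_self]
    push_cast; ring
  rw [isSmallStep_iff, ZMod.val_natCast_of_lt ha, h, ZMod.val_natCast, Nat.odd_iff]
  rcases Nat.lt_or_ge m a with hma | ham
  · rw [Nat.mod_eq_of_lt (a := 2 * (2 * m + 1) - 2 * a) (by omega)]; omega
  rcases Nat.eq_zero_or_pos a with rfl | ha₀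
  · simp
  rw [show 2 * (2 * m + 1) - 2 * a = (2 * m + 1 - 2 * a) + (2 * m + 1) by omega,
    Nat.add_mod_right, Nat.mod_eq_of_lt (a := 2 * m + 1 - 2 * a) (by omega)]
  omega

lemma isSmallStep_pair_iff {x y : ZMod (2 * m + 1)} :
    IsSmallStep m x ∧ IsSmallStep m y ∧ IsSmallStep m (-(x + y)) ↔
      x.val ≤ m ∧ y.val ≤ m ∧ m + 1 ≤ x.val + y.val := by
  simp only [isSmallStep_iff]
  by_cases hxy : x.val ≤ m ∧ y.val ≤ m
  · have hval : (x + y).val = x.val + y.val := ZMod.val_add_of_lt (by omega)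
    have hsum : x + y = 0 ↔ x.val + y.val = 0 := by rw [← hval, ZMod.val_eq_zero]
    simp only [ZMod.neg_val, hsum, hval]
    split_ifs <;> omega
  · omega

end Steps

open Finset in
lemma card_smallStepPairs (m : ℕ) :
    Nat.card {s : ZMod (2 * m + 1) × ZMod (2 * m + 1) //
      IsSmallStep m s.1 ∧ IsSmallStep m s.2 ∧ IsSmallStep m (-(s.1 + s.2))} =
      (m + 1).choose 2 := by
  classical
  have hsum : #((Icc 1 m).sigma range) = (m + 1).choose 2 := by
    simpa [Nat.choose_one_right] using Nat.sum_Icc_choose m 1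
  rw [Nat.card_eq_fintype_card, Fintype.card_subtype, ← hsum]
  simp only [isSmallStep_pair_iff]
  -- for a given `a`, the admissible `b` are `m + 1 - a, …, m`
  refine card_nbij' (fun s => ⟨s.1.val, s.1.val + s.2.val - (m + 1)⟩)
    (fun p => ((p.1 : ℕ), (m + 1 + p.2 - p.1 : ℕ))) ?_ ?_ ?_ ?_
  · rintro ⟨x, y⟩ h
    simp only [coe_filter, mem_univ, true_and, Set.mem_ofPred_eq] at h
    simp only [coe_sigma, Set.mem_sigma_iff, coe_Icc, Set.mem_Icc, coe_range, Set.mem_Iio]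
    omega
  · rintro ⟨a, j⟩ h
    simp only [coe_sigma, Set.mem_sigma_iff, coe_Icc, Set.mem_Icc, coe_range, Set.mem_Iio] at h
    simp only [coe_filter, mem_univ, true_and, Set.mem_ofPred_eq]
    rw [ZMod.val_natCast_of_lt (by omega), ZMod.val_natCast_of_lt (by omega)]
    omega
  · rintro ⟨x, y⟩ h
    simp only [coe_filter, mem_univ, true_and, Set.mem_ofPred_eq] at h
    dsimp only
    rw [show m + 1 + (x.val + y.val - (m + 1)) - x.val = y.val by omega]
    simp
  · rintro ⟨a, j⟩ h
    simp only [coe_sigma, Set.mem_sigma_iff, coe_Icc, Set.mem_Icc, coe_range, Set.mem_Iio] at h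
    simp only [ZMod.val_natCast_of_lt (show a < 2 * m + 1 by omega),
      ZMod.val_natCast_of_lt (show m + 1 + j - a < 2 * m + 1 by omega), Sigma.mk.injEq,
      heq_eq_eq, true_and]
    omega

lemma isSmallTriple_rotTriple {n : ℕ} {t : ZMod n × ZMod n × ZMod n} (h : isSmallTriple n t) :
    isSmallTriple n (rotTriple t) :=
  let ⟨h₁, h₂, h₃, h₄, h₅, h₆⟩ := h; ⟨h₂, h₃, h₁, h₅, h₆, h₄⟩

lemma isOddTriple_rotTriple {n : ℕ} {t : ZMod n × ZMod n × ZMod n} (h : isOddTriple n t) :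
    isOddTriple n (rotTriple t) :=
  let ⟨h₁, h₂, h₃, h₄, h₅, h₆⟩ := h; ⟨h₂, h₃, h₁, h₅, h₆, h₄⟩

lemma card_isSmallTriple (m : ℕ) :
    Nat.card {t // isSmallTriple (2 * m + 1) t} = (2 * m + 1) * (m + 1).choose 2 := by
  have h (t : ZMod (2 * m + 1) × ZMod (2 * m + 1) × ZMod (2 * m + 1)) :
      isSmallTriple (2 * m + 1) t ↔ IsSmallStep m (t.2.1 - t.1) ∧
        IsSmallStep m (t.2.2 - t.2.1) ∧ IsSmallStep m (-((t.2.1 - t.1) + (t.2.2 - t.2.1))) := by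
    rw [isSmallTriple_iff, show (2 * m + 1 - 1) / 2 = m by omega,
      show -((t.2.1 - t.1) + (t.2.2 - t.2.1)) = t.1 - t.2.2 by abel]
  rw [Nat.card_congr ((Equiv.subtypeEquivRight h).trans (tripleStepsEquiv fun s =>
    IsSmallStep m s.1 ∧ IsSmallStep m s.2 ∧ IsSmallStep m (-(s.1 + s.2)))), Nat.card_prod,
    Nat.card_zmod, card_smallStepPairs]

def negTwo (m : ℕ) : (ZMod (2 * m + 1))ˣ :=
  -ZMod.unitOfCoprime 2 (Nat.coprime_two_left.mpr (odd_two_mul_add_one m))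

lemma isOddTriple_negTwo_smul_iff {m : ℕ}
    (t : ZMod (2 * m + 1) × ZMod (2 * m + 1) × ZMod (2 * m + 1)) :
    isOddTriple (2 * m + 1) (negTwo m • t) ↔ isSmallTriple (2 * m + 1) t := by
  have hu : ((negTwo m : (ZMod (2 * m + 1))ˣ) : ZMod (2 * m + 1)) = -2 := by simp [negTwo]
  obtain ⟨a, b, c⟩ := t
  simp only [isOddTriple_iff, isSmallTriple_iff, Prod.smul_mk, Units.smul_def, smul_eq_mul, hu,
    ← mul_sub, odd_val_neg_two_mul_iff, show (2 * m + 1 - 1) / 2 = m by omega]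

lemma card_isOddTriple (m : ℕ) :
    Nat.card {t // isOddTriple (2 * m + 1) t} = Nat.card {t // isSmallTriple (2 * m + 1) t} :=
  Nat.card_congr (Equiv.subtypeEquiv (MulAction.toPerm (negTwo m))
    fun t => (isOddTriple_negTwo_smul_iff t).symm).symm

lemma three_mul_choose_three (m : ℕ) :
    3 * (2 * m + 1 + 1).choose 3 = 4 * ((2 * m + 1) * (m + 1).choose 2) := by
  have h₁ := Nat.add_one_mul_choose_eq (2 * m + 1) 2
  have h₂ := Nat.add_one_mul_choose_eq (2 * m) 1
  have h₃ := Nat.add_one_mul_choose_eq m 1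
  simp only [Nat.choose_one_right] at h₂ h₃
  nlinarith

theorem stmt_5_general (n : ℕ) (hodd : Odd n) :
    Nat.card (SmallTours n) = Nat.card (OddTours n) ∧
    4 * Nat.card (SmallTours n) = (n + 1).choose 3 := by
  obtain ⟨m, rfl⟩ := hodd
  have hS : Nat.card {t // isSmallTriple (2 * m + 1) t} = 3 * Nat.card (SmallTours _) :=
    card_eq_three_mul_card_quot_rotTriple _ (fun _ => isSmallTriple_rotTriple) fun _ h => h.1
  have hO : Nat.card {t // isOddTriple (2 * m + 1) t} = 3 * Nat.card (OddTours _) :=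
    card_eq_three_mul_card_quot_rotTriple _ (fun _ => isOddTriple_rotTriple) fun _ h => h.1
  rw [card_isOddTriple, card_isSmallTriple] at hO
  rw [card_isSmallTriple] at hS
  have := three_mul_choose_three m
  constructor <;> omega

/-- For odd `n ≥ 3`, the number of small tours equals the number of odd tours,
and both equal `(1/4)·C(n+1,3)`. -/
theorem stmt_5 (n : ℕ) (hn : 3 ≤ n) (hodd : Odd n) :
    Nat.card (SmallTours n) = Nat.card (OddTours n) ∧
    4 * Nat.card (SmallTours n) = (n + 1).choose 3 :=
  stmt_5_general n hodd
end

section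
/- Let n ≥ 3 be odd. The number of ordered triples (i,j,k) with 1 ≤ i < j < k ≤ n such that j-i, k-j, and (n+i)-k are all strictly less than n/2 equals (1/4)·C(n+1,3). -/
/-!
Write `n = 2m+1` and classify a triple by its closing gap `c = n + i - k`, which must lie in
`[1, m]`. Given `c`, the point `i` ranges over `[1, c]` and the first gap `j - i` over
`[m + 1 - c, m]`, so there are `c²` triples, and `4 ∑_{c=1}^m c² = C(2m+2, 3)`.
-/

open Finset

def smallTours (n : ℕ) : Finset (ℕ × ℕ × ℕ) :=
  (Icc 1 n ×ˢ Icc 1 n ×ˢ Icc 1 n).filter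
    (fun t : ℕ × ℕ × ℕ => t.1 < t.2.1 ∧ t.2.1 < t.2.2 ∧
      2 * (t.2.1 - t.1) < n ∧ 2 * (t.2.2 - t.2.1) < n ∧ 2 * (n + t.1 - t.2.2) < n)

theorem six_mul_sum_Icc_sq (m : ℕ) : 6 * ∑ c ∈ Icc 1 m, c ^ 2 = m * (m + 1) * (2 * m + 1) := by
  induction m with
  | zero => rfl
  | succ m ih =>
    rw [sum_Icc_succ_top (by omega), mul_add, ih]
    ring

theorem four_mul_sum_Icc_sq (m : ℕ) : 4 * ∑ c ∈ Icc 1 m, c ^ 2 = (2 * m + 2).choose 3 := by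
  have h6 : 6 * (2 * m + 2).choose 3 = (2 * m + 2) * (2 * m + 1) * (2 * m) := by
    rw [show 6 = Nat.factorial 3 from rfl, ← Nat.descFactorial_eq_factorial_mul_choose]
    simp only [Nat.descFactorial_succ, Nat.descFactorial_zero, Nat.add_sub_cancel,
      Nat.add_succ_sub_one, Nat.sub_zero]
    ring
  apply Nat.eq_of_mul_eq_mul_left (show 0 < 6 by norm_num)
  calc 6 * (4 * ∑ c ∈ Icc 1 m, c ^ 2) = 4 * (6 * ∑ c ∈ Icc 1 m, c ^ 2) := by ring
    _ = (2 * m + 2) * (2 * m + 1) * (2 * m) := by rw [six_mul_sum_Icc_sq]; ring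
    _ = 6 * (2 * m + 2).choose 3 := h6.symm

theorem card_smallTours (m : ℕ) :
    #(smallTours (2 * m + 1)) = ∑ c ∈ Icc 1 m, c ^ 2 := by
  have hsigma : #((Icc 1 m).sigma fun c => Icc 1 c ×ˢ Icc 1 c) = ∑ c ∈ Icc 1 m, c ^ 2 := by
    simp [card_sigma, sq]
  rw [← hsigma]
  -- `(i, j, k) ↦ ⟨c, (j - i) - (m - c), i⟩` with `c = n + i - k`
  apply card_nbij'
    (fun t => (⟨2 * m + 1 + t.1 - t.2.2, (t.2.1 + m + 1 - t.2.2, t.1)⟩ : (_ : ℕ) × ℕ × ℕ))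
    (fun s => (s.2.2, s.2.2 + (m - s.1) + s.2.1, s.2.2 + (2 * m + 1 - s.1)))
  · rintro ⟨i, j, k⟩ ht
    simp only [smallTours, coe_filter, Set.mem_ofPred_eq, mem_product, mem_Icc] at ht
    simp only [coe_sigma, Set.mem_sigma_iff, coe_Icc, Set.mem_Icc, coe_product,
      Set.mem_prod]
    omega
  · rintro ⟨c, x, i⟩ hs
    simp only [coe_sigma, Set.mem_sigma_iff, coe_Icc, Set.mem_Icc, coe_product,
      Set.mem_prod] at hs
    simp only [smallTours, coe_filter, Set.mem_ofPred_eq, mem_product, mem_Icc]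
    omega
  · rintro ⟨i, j, k⟩ ht
    simp only [smallTours, coe_filter, Set.mem_ofPred_eq, mem_product, mem_Icc] at ht
    simp only [Prod.mk.injEq, true_and]
    omega
  · rintro ⟨c, x, i⟩ hs
    simp only [coe_sigma, Set.mem_sigma_iff, coe_Icc, Set.mem_Icc, coe_product,
      Set.mem_prod] at hs
    simp only [Sigma.mk.injEq, Prod.mk.injEq, heq_eq_eq, and_true]
    omega

theorem stmt_6_general (n : ℕ) (hodd : Odd n) :
    4 * ((Finset.Icc 1 n ×ˢ Finset.Icc 1 n ×ˢ Finset.Icc 1 n).filter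
        (fun t : ℕ × ℕ × ℕ => t.1 < t.2.1 ∧ t.2.1 < t.2.2 ∧
          2 * (t.2.1 - t.1) < n ∧ 2 * (t.2.2 - t.2.1) < n ∧
          2 * (n + t.1 - t.2.2) < n)).card = (n + 1).choose 3 := by
  obtain ⟨m, rfl⟩ := hodd
  rw [← smallTours, card_smallTours, four_mul_sum_Icc_sq]

/-- For odd `n ≥ 3`, the number of triples `(i,j,k)` with `1 ≤ i < j < k ≤ n` whose
three cyclic gaps `j-i`, `k-j`, `n+i-k` are all less than `n/2` is `(1/4)·C(n+1,3)`. -/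
theorem stmt_6 (n : ℕ) (hn : 3 ≤ n) (hodd : Odd n) :
    4 * ((Finset.Icc 1 n ×ˢ Finset.Icc 1 n ×ˢ Finset.Icc 1 n).filter
        (fun t : ℕ × ℕ × ℕ => t.1 < t.2.1 ∧ t.2.1 < t.2.2 ∧
          2 * (t.2.1 - t.1) < n ∧ 2 * (t.2.2 - t.2.1) < n ∧
          2 * (n + t.1 - t.2.2) < n)).card = (n + 1).choose 3 :=
  stmt_6_general n hodd
end

section
/- Let n ≥ 3 be odd. The number of triples (i,j,k) with 1 ≤ i < j < k ≤ n such that j-i, k-j, and n+i-k are all odd equals (1/4)·C(n+1,3). -/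
private lemma c2' (N : ℕ) : 2 * (N+1).choose 2 = (N+1) * N := by
  induction N with
  | zero => rfl
  | succ k ih =>
    rw [Nat.choose_succ_succ (k+1) 1, Nat.choose_one_right, Nat.mul_add, ih]
    ring

private lemma L1 (M : ℕ) : ∑ q ∈ Finset.range (M+1), (2*M+1 - 2*q) = (M+1)^2 := by
  induction M with
  | zero => simp
  | succ k ih =>
    rw [Finset.sum_range_succ]
    have h : ∑ q ∈ Finset.range (k+1), (2*(k+1)+1 - 2*q)
        = ∑ q ∈ Finset.range (k+1), ((2*k+1 - 2*q) + 2) := by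
      refine Finset.sum_congr rfl fun q hq => ?_
      rw [Finset.mem_range] at hq
      omega
    rw [h, Finset.sum_add_distrib, ih, Finset.sum_const, Finset.card_range]
    have : 2*(k+1)+1 - 2*(k+1) = 1 := by omega
    rw [this]
    ring

private lemma H2 (N M : ℕ) (h : M + 1 ≤ N) :
    ∑ q ∈ Finset.range N, (2*M+1 - 2*q) = (M+1)^2 := by
  rw [← L1 M]
  symm
  apply Finset.sum_subset (Finset.range_subset_range.mpr (by omega))
  intro q _ hq
  rw [Finset.mem_range] at hq
  omega

private lemma L3 (m : ℕ) : 4 * ∑ t ∈ Finset.range m, (t+1)^2 = (2*m+2).choose 3 := by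
  induction m with
  | zero => rfl
  | succ k ih =>
    rw [Finset.sum_range_succ, Nat.mul_add, ih]
    have e1 : 2*(k+1)+2 = (2*k+3)+1 := by ring
    rw [e1, Nat.choose_succ_succ (2*k+3) 2]
    have e2 : 2*k+3 = (2*k+2)+1 := by ring
    rw [show (2*k+3).choose 3 = (2*k+2).choose 2 + (2*k+2).choose 3 from by
      rw [e2, Nat.choose_succ_succ (2*k+2) 2]]
    have h1 : 2 * (2*k+3).choose 2 = (2*k+3)*(2*k+2) := c2' (2*k+2)
    have h2 : 2 * (2*k+2).choose 2 = (2*k+2)*(2*k+1) := c2' (2*k+1)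
    have key : 2 * ((2*k+3).choose 2 + (2*k+2).choose 2) = 2 * (4*(k+1)^2) := by
      rw [Nat.mul_add, h1, h2]; ring
    have key2 : (2*k+3).choose 2 + (2*k+2).choose 2 = 4*(k+1)^2 :=
      Nat.eq_of_mul_eq_mul_left (by norm_num) key
    omega

/-- For odd `n ≥ 3`, the number of triples `(i,j,k)` with `1 ≤ i < j < k ≤ n` whose
three cyclic gaps `j-i`, `k-j`, `n+i-k` are all odd is `(1/4)·C(n+1,3)`. -/
theorem stmt_8 (n : ℕ) (hn : 3 ≤ n) (hodd : Odd n) :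
    4 * ((Finset.Icc 1 n ×ˢ Finset.Icc 1 n ×ˢ Finset.Icc 1 n).filter
        (fun t : ℕ × ℕ × ℕ => t.1 < t.2.1 ∧ t.2.1 < t.2.2 ∧
          Odd (t.2.1 - t.1) ∧ Odd (t.2.2 - t.2.1) ∧
          Odd (n + t.1 - t.2.2))).card = (n + 1).choose 3 := by
  obtain ⟨m, hm⟩ := hodd
  have hm1 : 1 ≤ m := by omega
  have hcard : ((Finset.Icc 1 n ×ˢ Finset.Icc 1 n ×ˢ Finset.Icc 1 n).filter
        (fun t : ℕ × ℕ × ℕ => t.1 < t.2.1 ∧ t.2.1 < t.2.2 ∧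
          Odd (t.2.1 - t.1) ∧ Odd (t.2.2 - t.2.1) ∧
          Odd (n + t.1 - t.2.2))).card =
      ((Finset.range n ×ˢ Finset.range n ×ˢ Finset.range n).filter
        (fun t : ℕ × ℕ × ℕ => 2*t.1 + 2*t.2.1 + t.2.2 + 3 ≤ n)).card := by
    apply Finset.card_bij'
      (i := fun t _ => (((t.2.1 - t.1 - 1)/2), ((t.2.2 - t.2.1 - 1)/2), t.1 - 1))
      (j := fun t _ => (t.2.2 + 1, t.2.2 + 2*t.1 + 2, t.2.2 + 2*t.1 + 2*t.2.1 + 3))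
    · intro a ha
      simp only [Finset.mem_filter, Finset.mem_product, Finset.mem_Icc,
        Finset.mem_range, Nat.odd_iff] at ha
      simp only [Prod.ext_iff]
      refine ⟨?_, ?_, ?_⟩ <;> omega
    · intro a ha
      simp only [Finset.mem_filter, Finset.mem_product, Finset.mem_range] at ha
      simp only [Prod.ext_iff]
      refine ⟨?_, ?_, ?_⟩ <;> omega
    · intro a ha
      simp only [Finset.mem_filter, Finset.mem_product, Finset.mem_Icc,
        Finset.mem_range, Nat.odd_iff] at ha ⊢
      omega
    · intro a ha
      simp only [Finset.mem_filter, Finset.mem_product, Finset.mem_Icc,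
        Finset.mem_range, Nat.odd_iff] at ha ⊢
      omega
  rw [hcard]
  have hDsum : ((Finset.range n ×ˢ Finset.range n ×ˢ Finset.range n).filter
        (fun t : ℕ × ℕ × ℕ => 2*t.1 + 2*t.2.1 + t.2.2 + 3 ≤ n)).card
      = ∑ p ∈ Finset.range n, ∑ q ∈ Finset.range n,
      ∑ r ∈ Finset.range n, (if 2*p + 2*q + r + 3 ≤ n then 1 else 0) := by
    rw [Finset.card_filter, Finset.sum_product]
    refine Finset.sum_congr rfl fun p _ => ?_
    rw [Finset.sum_product]
  have hinner : ∀ p q, (∑ r ∈ Finset.range n,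
      (if 2*p + 2*q + r + 3 ≤ n then 1 else 0)) = n - (2*p + 2*q + 2) := by
    intro p q
    rw [← Finset.card_filter]
    have h : (Finset.range n).filter (fun r => 2*p + 2*q + r + 3 ≤ n)
        = Finset.range (n - (2*p + 2*q + 2)) := by
      ext r
      simp only [Finset.mem_filter, Finset.mem_range]
      omega
    rw [h, Finset.card_range]
  have hmid : ∀ p, (∑ q ∈ Finset.range n, (n - (2*p + 2*q + 2)))
      = if p + 1 ≤ m then (m - p)^2 else 0 := by
    intro p
    by_cases hp : p + 1 ≤ m
    · rw [if_pos hp]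
      have hc : ∀ q ∈ Finset.range n, n - (2*p + 2*q + 2) = 2*(m-1-p) + 1 - 2*q := by
        intro q _; omega
      rw [Finset.sum_congr rfl hc, H2 n (m-1-p) (by omega)]
      congr 1
      omega
    · rw [if_neg hp]
      refine Finset.sum_eq_zero fun q _ => ?_
      omega
  rw [hDsum]
  rw [Finset.sum_congr rfl fun p _ => by
    rw [Finset.sum_congr rfl fun q _ => hinner p q, hmid p]]
  rw [← Finset.sum_subset (Finset.range_subset_range.mpr (show m ≤ n by omega))
    (fun p _ hp => by rw [Finset.mem_range] at hp; rw [if_neg (by omega)])]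
  have hpos : ∑ p ∈ Finset.range m, (if p + 1 ≤ m then (m - p)^2 else 0)
      = ∑ p ∈ Finset.range m, (m - p)^2 :=
    Finset.sum_congr rfl fun p hp => if_pos (by rw [Finset.mem_range] at hp; omega)
  rw [hpos]
  have hrefl : ∑ p ∈ Finset.range m, (m - p)^2 = ∑ t ∈ Finset.range m, (t+1)^2 := by
    rw [← Finset.sum_range_reflect (fun j => (j+1)^2) m]
    refine Finset.sum_congr rfl fun p hp => ?_
    rw [Finset.mem_range] at hp
    congr 1
    omega
  rw [hrefl, show n + 1 = 2*m+2 from by omega]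
  exact L3 m
end

section
/- Let n ≥ 5 be odd and let s₁,...,sₙ > 0 with sum S be majority dominant. Define a bijection between the n facet-labels {1,...,n} (edges of the fixed-angles polygon) and the n vertices of C_{n-3}(n) by i ↦ i' where i' ≡ -2i (mod n), i' ∈ {1,...,n}. Then for 1 ≤ i < j < k ≤ n, the three cyclic gaps of (i,j,k) are all less than n/2 if and only if the three cyclic gaps of the sorted triple corresponding to (i',j',k') are all odd. -/
lemma lval_aux (n x y : ℕ) (hn : 0 < n) (h1 : 1 ≤ x) (h2 : x < y) (h3 : y ≤ n) :
    ((y : ZMod n) - (x : ZMod n)).val = y - x ∧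
    ((x : ZMod n) - (y : ZMod n)).val = n + x - y := by
  haveI : NeZero n := ⟨hn.ne'⟩
  constructor
  · rw [← Nat.cast_sub h2.le, ZMod.val_natCast, Nat.mod_eq_of_lt (by omega)]
  · have h4 : (x : ZMod n) - y = ((n + x - y : ℕ) : ZMod n) := by
      rw [Nat.cast_sub (by omega : y ≤ n + x)]
      push_cast
      rw [ZMod.natCast_self]
      ring
    rw [h4, ZMod.val_natCast, Nat.mod_eq_of_lt (by omega)]

lemma key_aux (n g : ℕ) (hn : 5 ≤ n) (ho : n % 2 = 1) (hg1 : 1 ≤ g) (hgn : g < n) :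
    (2*g < n → (-2 * (g : ZMod n)).val = n - 2*g) ∧
    (n < 2*g → (-2 * (g : ZMod n)).val = 2*n - 2*g) := by
  haveI : NeZero n := ⟨by omega⟩
  have h : -2 * (g : ZMod n) = ((2*n - 2*g : ℕ) : ZMod n) := by
    rw [Nat.cast_sub (by omega : 2*g ≤ 2*n)]
    push_cast
    rw [ZMod.natCast_self]
    ring
  rw [h, ZMod.val_natCast]
  constructor
  · intro hlt
    have h5 : 2*n - 2*g = n + (n - 2*g) := by omega
    rw [h5, Nat.add_mod_left, Nat.mod_eq_of_lt (by omega)]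
  · intro hlt
    rw [Nat.mod_eq_of_lt (by omega)]

lemma pair_aux (n g x' y' : ℕ) (hn : 5 ≤ n) (ho : n % 2 = 1)
    (hg1 : 1 ≤ g) (hgn : g < n)
    (hx1 : 1 ≤ x') (hxn : x' ≤ n) (hy1 : 1 ≤ y') (hyn : y' ≤ n)
    (he : (y' : ZMod n) - (x' : ZMod n) = -2 * (g : ZMod n)) :
    ∃ d, 1 ≤ d ∧ d < n ∧ (2*g < n → d = n - 2*g) ∧ (n < 2*g → d = 2*n - 2*g) ∧
      (x' < y' → y' - x' = d) ∧ (y' < x' → n + y' - x' = d) := by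
  haveI : NeZero n := ⟨by omega⟩
  obtain ⟨hk1, hk2⟩ := key_aux n g hn ho hg1 hgn
  refine ⟨(-2 * (g : ZMod n)).val, by omega, ZMod.val_lt _, hk1, hk2, ?_, ?_⟩
  · intro h
    rw [← he]
    exact ((lval_aux n x' y' (by omega) hx1 h hyn).1).symm
  · intro h
    rw [← he]
    exact ((lval_aux n y' x' (by omega) hy1 h hxn).2).symm

/-- For odd `n ≥ 5` and a majority-dominant positive necklace `s`: under the
correspondence `i ↦ i'` with `i' ≡ -2i (mod n)` and `i' ∈ {1,...,n}`, a triple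
`1 ≤ i < j < k ≤ n` has all three cyclic gaps less than `n/2` iff the sorted
triple `a < b < c` corresponding to `(i',j',k')` has all three cyclic gaps odd. -/
theorem stmt_17 (n : ℕ) [NeZero n] (hn : 5 ≤ n) (hodd : Odd n)
    (s : ZMod n → ℝ) (hpos : ∀ i, 0 < s i)
    (hmaj : ∀ (i : ZMod n) (ℓ : ℕ), ℓ ≤ n → 2 * ℓ > n →
      2 * ∑ t ∈ Finset.range ℓ, s (i + t) > ∑ x, s x)
    (i j k i' j' k' a b c : ℕ)
    (hi : 1 ≤ i) (hij : i < j) (hjk : j < k) (hkn : k ≤ n)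
    (hi' : 1 ≤ i' ∧ i' ≤ n ∧ (i' : ZMod n) = -2 * (i : ZMod n))
    (hj' : 1 ≤ j' ∧ j' ≤ n ∧ (j' : ZMod n) = -2 * (j : ZMod n))
    (hk' : 1 ≤ k' ∧ k' ≤ n ∧ (k' : ZMod n) = -2 * (k : ZMod n))
    (hab : a < b) (hbc : b < c)
    (habc : ({a, b, c} : Finset ℕ) = {i', j', k'}) :
    (2 * (j - i) < n ∧ 2 * (k - j) < n ∧ 2 * (n + i - k) < n) ↔
      (Odd (b - a) ∧ Odd (c - b) ∧ Odd (n + a - c)) := by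
  have ho : n % 2 = 1 := Nat.odd_iff.mp hodd
  obtain ⟨hi'1, hi'n, hi'e⟩ := hi'
  obtain ⟨hj'1, hj'n, hj'e⟩ := hj'
  obtain ⟨hk'1, hk'n, hk'e⟩ := hk'
  have hje : ((j' : ZMod n)) - (i' : ZMod n) = -2 * ((j - i : ℕ) : ZMod n) := by
    rw [hi'e, hj'e, Nat.cast_sub hij.le]; ring
  have hke : ((k' : ZMod n)) - (j' : ZMod n) = -2 * ((k - j : ℕ) : ZMod n) := by
    rw [hj'e, hk'e, Nat.cast_sub hjk.le]; ring
  have hie : ((i' : ZMod n)) - (k' : ZMod n) = -2 * ((n + i - k : ℕ) : ZMod n) := by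
    rw [hi'e, hk'e, Nat.cast_sub (show k ≤ n + i by omega)]
    push_cast
    rw [ZMod.natCast_self]
    ring
  obtain ⟨d1, hd1a, hd1b, hd1c, hd1d, hd1e, hd1f⟩ :=
    pair_aux n (j - i) i' j' hn ho (by omega) (by omega) hi'1 hi'n hj'1 hj'n hje
  obtain ⟨d2, hd2a, hd2b, hd2c, hd2d, hd2e, hd2f⟩ :=
    pair_aux n (k - j) j' k' hn ho (by omega) (by omega) hj'1 hj'n hk'1 hk'n hke
  obtain ⟨d3, hd3a, hd3b, hd3c, hd3d, hd3e, hd3f⟩ :=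
    pair_aux n (n + i - k) k' i' hn ho (by omega) (by omega) hk'1 hk'n hi'1 hi'n hie
  have ha : a = i' ∨ a = j' ∨ a = k' := by
    have h : a ∈ ({i', j', k'} : Finset ℕ) := by rw [← habc]; simp
    simpa using h
  have hb : b = i' ∨ b = j' ∨ b = k' := by
    have h : b ∈ ({i', j', k'} : Finset ℕ) := by rw [← habc]; simp
    simpa using h
  have hc : c = i' ∨ c = j' ∨ c = k' := by
    have h : c ∈ ({i', j', k'} : Finset ℕ) := by rw [← habc]; simp
    simpa using h
  simp only [Nat.odd_iff]
  rcases ha with rfl | rfl | rfl <;> rcases hb with rfl | rfl | rfl <;>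
    rcases hc with rfl | rfl | rfl <;> omega
end

section
/- Let n ≥ 3 and let s₁,...,sₙ > 0 with sum S satisfy max(s₁,...,sₙ) < S/2. Then there exists a vector ℓ ∈ ℝⁿ with all entries strictly positive, ℓ₁+⋯+ℓₙ = 1, and Σₖ ℓₖ·(cos θₖ, sin θₖ) = 0, where θₖ = (2π/S)(s₁+⋯+sₖ); i.e., there is a unit-perimeter convex n-gon with external angle 2πsₖ/S at its k-th vertex and all edge lengths positive. -/
/-!
Take the polygon circumscribed about the unit circle whose k-th edge has direction `e^{iθₖ}`.
If `αₖ = πsₖ/S` is half the external angle at the k-th vertex, the two tangent segments from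
that vertex have length `tan αₖ`, so the k-th edge has length `tan αₖ + tan αₖ₊₁`, positive
since `αₖ < π/2`. Closure is the identity
`tan α · (e^{2iα} + 1) = -i (e^{2iα} - 1)`: after multiplying by `e^{iθₖ}` it turns the sum of
the edge vectors into the cyclic telescoping sum `-i ∑ₖ (e^{iθₖ₊₁} - e^{iθₖ}) = 0`.
Normalizing the lengths gives unit perimeter.
-/

open Complex Finset

theorem Fin.prod_Iic_add_one_of_prod_eq_one {M : Type*} [CommMonoid M] {n : ℕ} [NeZero n]
    (w : Fin n → M) (hw : ∏ i, w i = 1) (k : Fin n) :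
    ∏ i ∈ Iic (k + 1), w i = (∏ i ∈ Iic k, w i) * w (k + 1) := by
  obtain ⟨m, rfl⟩ := Nat.exists_eq_succ_of_ne_zero (NeZero.ne n)
  induction k using Fin.lastCases with
  | last =>
    rw [Fin.last_add_one, ← bot_eq_zero, ← Fin.top_eq_last, Iic_bot, Iic_top, hw]
    simp
  | cast j =>
    rw [Fin.coeSucc_eq_succ, ← prod_Iio_mul_eq_prod_Iic, ← Fin.orderSucc_castSucc,
      Iio_succ_eq_Iic_of_not_isMax (Fin.castSucc_lt_last j).not_isMax]

theorem Fin.sum_add_add_one_mul_eq_zero {R : Type*} [CommRing R] {n : ℕ} [NeZero n]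
    (a u : Fin n → R) (c : R)
    (h : ∀ k, a (k + 1) * (u (k + 1) + u k) = c * (u (k + 1) - u k)) :
    ∑ k, (a k + a (k + 1)) * u k = 0 := by
  have shift (f : Fin n → R) : ∑ k, f (k + 1) = ∑ k, f k :=
    Fintype.sum_equiv (Equiv.addRight 1) _ _ fun _ => rfl
  calc ∑ k, (a k + a (k + 1)) * u k
      = ∑ k, a (k + 1) * (u (k + 1) + u k) := by
        simp only [add_mul, mul_add, sum_add_distrib, shift fun k => a k * u k]
    _ = c * ∑ k, (u (k + 1) - u k) := by simp only [h, mul_sum]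
    _ = 0 := by rw [sum_sub_distrib, shift u, sub_self, mul_zero]

theorem ofReal_tan_half_mul_exp_mul_I_add_one {y : ℝ} (hy : Real.cos (y / 2) ≠ 0) :
    (Real.tan (y / 2) : ℂ) * (exp (y * I) + 1) = -I * (exp (y * I) - 1) := by
  obtain ⟨z, rfl⟩ : ∃ z, y = 2 * z := ⟨y / 2, by ring⟩
  rw [mul_div_cancel_left₀ z two_ne_zero] at hy ⊢
  have hz : cos (z : ℂ) ≠ 0 := by exact_mod_cast hy
  rw [ofReal_tan, tan_eq_sin_div_cos, ofReal_mul, ofReal_ofNat, exp_mul_I, cos_two_mul,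
    sin_two_mul, div_mul_eq_mul_div, div_eq_iff hz]
  linear_combination (2 * I * cos (z : ℂ)) * sin_sq_add_cos_sq (z : ℂ) +
    (2 * sin (z : ℂ) * cos (z : ℂ) ^ 2) * I_sq

theorem exp_sum_Iic_add_one_mul_I {n : ℕ} [NeZero n] (φ : Fin n → ℝ)
    (hφ : ∑ k, φ k = 2 * Real.pi) (k : Fin n) :
    exp ((∑ t ∈ Iic (k + 1), φ t : ℝ) * I)
      = exp ((∑ t ∈ Iic k, φ t : ℝ) * I) * exp (φ (k + 1) * I) := by
  have hprod (u : Finset (Fin n)) :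
      exp ((∑ t ∈ u, φ t : ℝ) * I) = ∏ t ∈ u, exp (φ t * I) := by
    rw [ofReal_sum, sum_mul, exp_sum]
  have hprod_univ : ∏ t, exp (φ t * I) = 1 := by
    rw [← hprod, hφ]
    push_cast
    exact exp_two_pi_mul_I
  rw [hprod, hprod, Fin.prod_Iic_add_one_of_prod_eq_one _ hprod_univ]

theorem sum_tan_half_add_mul_exp_sum_Iic_eq_zero {n : ℕ} [NeZero n] (φ : Fin n → ℝ)
    (hcos : ∀ k, Real.cos (φ k / 2) ≠ 0) (hφ : ∑ k, φ k = 2 * Real.pi) :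
    ∑ k, ((Real.tan (φ k / 2) + Real.tan (φ (k + 1) / 2) : ℝ) : ℂ)
      * exp ((∑ t ∈ Iic k, φ t : ℝ) * I) = 0 := by
  simp only [ofReal_add]
  refine Fin.sum_add_add_one_mul_eq_zero _ _ (-I) fun k => ?_
  rw [exp_sum_Iic_add_one_mul_I φ hφ]
  linear_combination exp ((∑ t ∈ Iic k, φ t : ℝ) * I) *
    ofReal_tan_half_mul_exp_mul_I_add_one (hcos (k + 1))

theorem exists_pos_sum_eq_one_of_sum_mul_exp_eq_zero {ι : Type*} [Fintype ι] [Nonempty ι]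
    (b θ : ι → ℝ) (hb : ∀ k, 0 < b k) (h : ∑ k, (b k : ℂ) * exp (θ k * I) = 0) :
    ∃ ℓ : ι → ℝ, (∀ k, 0 < ℓ k) ∧ ∑ k, ℓ k = 1 ∧
      ∑ k, ℓ k * Real.cos (θ k) = 0 ∧ ∑ k, ℓ k * Real.sin (θ k) = 0 := by
  have hB : 0 < ∑ k, b k := sum_pos (fun k _ => hb k) univ_nonempty
  refine ⟨fun k => b k / ∑ k, b k, fun k => div_pos (hb k) hB,
    by rw [← sum_div, div_self hB.ne'], ?_⟩
  have hre := congrArg re h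
  have him := congrArg im h
  simp only [re_sum, im_sum, re_ofReal_mul, im_ofReal_mul, exp_ofReal_mul_I_re,
    exp_ofReal_mul_I_im, zero_re, zero_im] at hre him
  simp only [div_mul_eq_mul_div, ← sum_div, hre, him, zero_div, and_self]

/-- For `n ≥ 3` and positive `s₁,...,sₙ` with sum `S` satisfying `max sₖ < S/2`,
there is a unit-perimeter convex `n`-gon with external angle `2πsₖ/S` at its
`k`-th vertex and all edge lengths positive: a vector `ℓ` of positive entries
summing to `1` with vanishing weighted sum of the edge-direction vectors. -/
theorem stmt_18 (n : ℕ) (hn : 3 ≤ n) (s : Fin n → ℝ) (hpos : ∀ k, 0 < s k)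
    (S : ℝ) (hS : S = ∑ k, s k) (hmax : ∀ k, s k < S / 2) :
    ∃ ℓ : Fin n → ℝ, (∀ k, 0 < ℓ k) ∧ (∑ k, ℓ k = 1) ∧
      (∑ k, ℓ k * Real.cos ((2 * Real.pi / S) * ∑ t ∈ Finset.Iic k, s t)) = 0 ∧
      (∑ k, ℓ k * Real.sin ((2 * Real.pi / S) * ∑ t ∈ Finset.Iic k, s t)) = 0 := by
  have : NeZero n := ⟨by omega⟩
  have hS0 : 0 < S := hS ▸ sum_pos (fun k _ => hpos k) univ_nonempty
  set φ : Fin n → ℝ := fun k => 2 * Real.pi / S * s k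
  have hφ : ∑ k, φ k = 2 * Real.pi := by rw [← mul_sum, ← hS]; field_simp
  have hhalf k : φ k / 2 ∈ Set.Ioo 0 (Real.pi / 2) := by
    have hsk := hpos k
    have hk : s k / S < 1 / 2 := (div_lt_iff₀ hS0).2 (by linarith [hmax k])
    refine ⟨by positivity, ?_⟩
    calc φ k / 2 = Real.pi * (s k / S) := by ring
      _ < Real.pi * (1 / 2) := by gcongr
      _ = Real.pi / 2 := by ring
  have htan k : 0 < Real.tan (φ k / 2) :=
    Real.tan_pos_of_pos_of_lt_pi_div_two (hhalf k).1 (hhalf k).2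
  have hcos k : Real.cos (φ k / 2) ≠ 0 :=
    (Real.cos_pos_of_mem_Ioo ⟨by linarith [(hhalf k).1, Real.pi_pos], (hhalf k).2⟩).ne'
  simp only [mul_sum]
  exact exists_pos_sum_eq_one_of_sum_mul_exp_eq_zero _ _ (fun k => add_pos (htan k) (htan _))
    (sum_tan_half_add_mul_exp_sum_Iic_eq_zero φ hcos hφ)
end
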